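/- Let U ⊆ ℝ_t × ℝ²_x be open, let h and v¹, v² be C² on U, and suppose they solve the 2D rotating shallow water system B h = −h div v, B v¹ = v² − ∂₁h, B v² = −v¹ − ∂₂h on U. Then for i = 1, 2 the identity B²v^i = ε_{ij} B v^j + (div v) ∂_i h + h ∂_i(div v) + ∂_i v^l ∂_l h holds on U, where j and l are summed over {1,2}. -/

import Mathlib

/-- Partial derivative in the `i`-th coordinate direction of spacetime
`ℝ_t × ℝ²_x ≃ (Fin 3 → ℝ)`, coordinates `(x⁰, x¹, x²) = (t, x₁, x₂)`. -/
noncomputable def pd (i : Fin 3) (f : (Fin 3 → ℝ) → ℝ) (x : Fin 3 → ℝ) : ℝ :=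
  fderiv ℝ f x (Pi.single i 1)

/-- Material derivative `B = ∂ₜ + v¹∂₁ + v²∂₂`. -/
noncomputable def matD (v1 v2 f : (Fin 3 → ℝ) → ℝ) (x : Fin 3 → ℝ) : ℝ :=
  pd 0 f x + v1 x * pd 1 f x + v2 x * pd 2 f x

/-!
Apply `B` to the momentum equations `B v¹ = v² − ∂₁h`, `B v² = −v¹ − ∂₂h`. The only term that
is not already of the required form is `B ∂ᵢh`. By the symmetry of second derivatives of a `C²`
function, `∂ᵢ` and `B` commute up to `[∂ᵢ, B] f = ∂ᵢvˡ ∂ₗf`, so `B ∂ᵢh = ∂ᵢ(B h) − ∂ᵢvˡ ∂ₗh`,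
and `∂ᵢ(B h) = −∂ᵢ(h div v)` is read off from the mass equation.
-/

open Filter Topology

section PartialDerivatives

variable {f g : (Fin 3 → ℝ) → ℝ} {x : Fin 3 → ℝ}

lemma pd_congr (hfg : f =ᶠ[𝓝 x] g) (i : Fin 3) : pd i f x = pd i g x := by
  rw [pd, pd, hfg.fderiv_eq]

lemma pd_add (hf : DifferentiableAt ℝ f x) (hg : DifferentiableAt ℝ g x) (i : Fin 3) :
    pd i (fun y => f y + g y) x = pd i f x + pd i g x := by
  simp [pd, fderiv_fun_add hf hg]

lemma pd_neg (i : Fin 3) : pd i (fun y => -f y) x = -pd i f x := by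
  simp [pd]

lemma pd_sub (hf : DifferentiableAt ℝ f x) (hg : DifferentiableAt ℝ g x) (i : Fin 3) :
    pd i (fun y => f y - g y) x = pd i f x - pd i g x := by
  simp [pd, fderiv_fun_sub hf hg]

lemma pd_mul (hf : DifferentiableAt ℝ f x) (hg : DifferentiableAt ℝ g x) (i : Fin 3) :
    pd i (fun y => f y * g y) x = f x * pd i g x + pd i f x * g x := by
  simp [pd, fderiv_fun_mul hf hg, mul_comm]

lemma differentiableAt_fderiv_of_contDiffAt_two (hf : ContDiffAt ℝ 2 f x) :
    DifferentiableAt ℝ (fderiv ℝ f) x :=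
  (hf.fderiv_right (m := 1) (by norm_num)).differentiableAt (by norm_num)

lemma differentiableAt_pd (hf : ContDiffAt ℝ 2 f x) (i : Fin 3) :
    DifferentiableAt ℝ (pd i f) x :=
  (differentiableAt_fderiv_of_contDiffAt_two hf).clm_apply (differentiableAt_const _)

lemma pd_pd_eq_fderiv_fderiv (hf : ContDiffAt ℝ 2 f x) (i j : Fin 3) :
    pd i (pd j f) x = fderiv ℝ (fderiv ℝ f) x (Pi.single i 1) (Pi.single j 1) := by
  change fderiv ℝ (fun y => fderiv ℝ f y (Pi.single j 1)) x (Pi.single i 1) = _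
  rw [fderiv_clm_apply (differentiableAt_fderiv_of_contDiffAt_two hf) (differentiableAt_const _)]
  simp

lemma pd_comm (hf : ContDiffAt ℝ 2 f x) (i j : Fin 3) :
    pd i (pd j f) x = pd j (pd i f) x := by
  have hderiv : ∀ᶠ y in 𝓝 x, HasFDerivAt f (fderiv ℝ f y) y := by
    filter_upwards [hf.eventually (by norm_num)] with y hy
    exact (hy.differentiableAt two_ne_zero).hasFDerivAt
  rw [pd_pd_eq_fderiv_fderiv hf, pd_pd_eq_fderiv_fderiv hf,
    second_derivative_symmetric_of_eventually hderiv
      (differentiableAt_fderiv_of_contDiffAt_two hf).hasFDerivAt]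

end PartialDerivatives

section MaterialDerivative

variable {v1 v2 f g : (Fin 3 → ℝ) → ℝ} {x : Fin 3 → ℝ}

lemma matD_congr (hfg : f =ᶠ[𝓝 x] g) : matD v1 v2 f x = matD v1 v2 g x := by
  simp only [matD, pd_congr hfg]

lemma matD_neg : matD v1 v2 (fun y => -f y) x = -matD v1 v2 f x := by
  simp only [matD, pd_neg]
  ring

lemma matD_sub (hf : DifferentiableAt ℝ f x) (hg : DifferentiableAt ℝ g x) :
    matD v1 v2 (fun y => f y - g y) x = matD v1 v2 f x - matD v1 v2 g x := by
  simp only [matD, pd_sub hf hg]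
  ring

lemma pd_matD (hf : ContDiffAt ℝ 2 f x) (hv1 : DifferentiableAt ℝ v1 x)
    (hv2 : DifferentiableAt ℝ v2 x) (i : Fin 3) :
    pd i (matD v1 v2 f) x
      = matD v1 v2 (pd i f) x + pd i v1 x * pd 1 f x + pd i v2 x * pd 2 f x := by
  have d0 := differentiableAt_pd hf 0
  have d1 := differentiableAt_pd hf 1
  have d2 := differentiableAt_pd hf 2
  change pd i (fun y => (pd 0 f y + v1 y * pd 1 f y) + v2 y * pd 2 f y) x = _
  rw [pd_add (by fun_prop) (by fun_prop), pd_add d0 (by fun_prop), pd_mul hv1 d1,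
    pd_mul hv2 d2, pd_comm hf i 0, pd_comm hf i 1, pd_comm hf i 2, matD]
  ring

lemma matD_pd_of_mass {h : (Fin 3 → ℝ) → ℝ} (hh : ContDiffAt ℝ 2 h x)
    (hv1 : ContDiffAt ℝ 2 v1 x) (hv2 : ContDiffAt ℝ 2 v2 x)
    (hmass : ∀ᶠ y in 𝓝 x, matD v1 v2 h y = -h y * (pd 1 v1 y + pd 2 v2 y)) (i : Fin 3) :
    matD v1 v2 (pd i h) x
      = -h x * pd i (fun y => pd 1 v1 y + pd 2 v2 y) x
        - pd i h x * (pd 1 v1 x + pd 2 v2 x)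
        - pd i v1 x * pd 1 h x - pd i v2 x * pd 2 h x := by
  have hdiv : DifferentiableAt ℝ (fun y => pd 1 v1 y + pd 2 v2 y) x :=
    (differentiableAt_pd hv1 1).add (differentiableAt_pd hv2 2)
  have hcomm := pd_matD hh (hv1.differentiableAt two_ne_zero)
    (hv2.differentiableAt two_ne_zero) i
  have hdiff : pd i (matD v1 v2 h) x
      = -h x * pd i (fun y => pd 1 v1 y + pd 2 v2 y) x
        - pd i h x * (pd 1 v1 x + pd 2 v2 x) := by
    rw [pd_congr hmass i, pd_mul (f := fun y => -h y)
      (hh.differentiableAt two_ne_zero).neg hdiv, pd_neg]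
    ring
  linarith

end MaterialDerivative

/-- For `C²` solutions of the 2D rotating shallow water system on an open set `U`, the
velocity components satisfy, for `i = 1, 2`,
`B²v^i = ε_{ij} B v^j + (div v) ∂_i h + h ∂_i(div v) + ∂_i v^l ∂_l h` on `U`
(`ε₁₂ = 1 = −ε₂₁`, summation over `j, l ∈ {1,2}`).  The two conjuncts are the cases
`i = 1` and `i = 2`. -/
theorem second_material_derivative_of_velocity
    (U : Set (Fin 3 → ℝ)) (hU : IsOpen U)
    (h v1 v2 : (Fin 3 → ℝ) → ℝ)
    (hh : ContDiffOn ℝ 2 h U)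
    (hv1 : ContDiffOn ℝ 2 v1 U) (hv2 : ContDiffOn ℝ 2 v2 U)
    (hmass : ∀ x ∈ U, matD v1 v2 h x = -(h x) * (pd 1 v1 x + pd 2 v2 x))
    (hmom1 : ∀ x ∈ U, matD v1 v2 v1 x = v2 x - pd 1 h x)
    (hmom2 : ∀ x ∈ U, matD v1 v2 v2 x = -v1 x - pd 2 h x) :
    ∀ x ∈ U,
      (matD v1 v2 (matD v1 v2 v1) x
        = matD v1 v2 v2 x
          + (pd 1 v1 x + pd 2 v2 x) * pd 1 h x
          + h x * pd 1 (fun y => pd 1 v1 y + pd 2 v2 y) x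
          + (pd 1 v1 x * pd 1 h x + pd 1 v2 x * pd 2 h x)) ∧
      (matD v1 v2 (matD v1 v2 v2) x
        = -(matD v1 v2 v1 x)
          + (pd 1 v1 x + pd 2 v2 x) * pd 2 h x
          + h x * pd 2 (fun y => pd 1 v1 y + pd 2 v2 y) x
          + (pd 2 v1 x * pd 1 h x + pd 2 v2 x * pd 2 h x)) := by
  intro x hx
  have hU_nhds : U ∈ 𝓝 x := hU.mem_nhds hx
  have hh_x := hh.contDiffAt hU_nhds
  have hv1_x := hv1.contDiffAt hU_nhds
  have hv2_x := hv2.contDiffAt hU_nhds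
  have hBh := matD_pd_of_mass hh_x hv1_x hv2_x (eventually_of_mem hU_nhds hmass)
  constructor
  · rw [matD_congr (eventually_of_mem hU_nhds hmom1),
      matD_sub (hv2_x.differentiableAt two_ne_zero) (differentiableAt_pd hh_x 1), hBh 1]
    ring
  · rw [matD_congr (eventually_of_mem hU_nhds hmom2),
      matD_sub (f := fun y => -v1 y) (g := pd 2 h) (hv1_x.differentiableAt two_ne_zero).neg
        (differentiableAt_pd hh_x 2), matD_neg, hBh 2]
    ring
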